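/- Let r ≥ 2, let I ⊆ ℝ be an open interval, and let T, X₁, X₀ : I → ℝ be smooth with T'(t)X₁(t) ≠ 0 for all t ∈ I. Suppose that for every r-th order linear ODE E on I of first Arnold form (coefficient a₀ ≡ 0, arbitrary smooth a₁, …, a_{r−1}, b) there exists an r-th order linear ODE Ẽ on T(I) of first Arnold form (ã₀ ≡ 0) such that the fiber-preserving transformation t̃ = T(t), x̃ = X₁(t)x + X₀(t) maps E to Ẽ. Then X₁ is a (nonzero) constant function. (The equivalence group of the class of r-th order linear ODEs in first Arnold form consists of transformations t̃ = T(t), x̃ = Cx + X₀(t).) -/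

import Mathlib

/-!
Apply the hypothesis to the constant-coefficient equations whose characteristic polynomial has
the simple roots `{0, …, r} \ {k}`, `1 ≤ k ≤ r`. Their solutions `e^{νt}` are carried to
solutions `Y e^{ντ}` of an equation of first Arnold form, where `Y = X₁ ∘ T⁻¹` and `τ = T⁻¹`.
At a point `s`, `e^{-ντ} (Y e^{ντ})⁽ⁱ⁾(s) = Gᵢ(ν)` for a polynomial `Gᵢ` of degree `i`, with top
coefficient `Y τ'^i ≠ 0` and `Gᵢ(0) = Y⁽ⁱ⁾(s)`. The transformed equation with `ã₀ = 0` yields a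
combination of `G₁, …, G_r` that vanishes exactly on `{0, …, r} \ {k}`. These `r` combinations
all vanish at `0` and span `span {G₁, …, G_r}`, so `Y'(s) = G₁(0) = 0`.
-/

open Set

/-- The left-hand side `x^(r)(t) + ∑_{i<r} aᵢ(t) x^(i)(t)` of an `r`-th order linear ODE. -/
noncomputable def odeLHS (r : ℕ) (a : ℕ → ℝ → ℝ) (x : ℝ → ℝ) (t : ℝ) : ℝ :=
  iteratedDeriv r x t + ∑ i ∈ Finset.range r, a i t * iteratedDeriv i x t

/-- `x` is a solution on `I` of the linear ODE `x^(r) + ∑_{i<r} aᵢ x^(i) = b`: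
it is smooth on `I` and satisfies the identity on `I`. -/
def IsSolODE (r : ℕ) (a : ℕ → ℝ → ℝ) (b : ℝ → ℝ) (I : Set ℝ) (x : ℝ → ℝ) : Prop :=
  ContDiffOn ℝ (⊤ : ℕ∞) x I ∧ ∀ t ∈ I, odeLHS r a x t = b t

/-- `I ⊆ ℝ` is a (nonempty) open interval. -/
def IsOpenInterval (I : Set ℝ) : Prop := IsOpen I ∧ I.OrdConnected ∧ I.Nonempty

/-- The fiber-preserving transformation `t̃ = T(t)`, `x̃ = X₁(t)x + X₀(t)` maps the
`r`-th order linear ODE with coefficients `a`, `b` on `I` to the one with coefficients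
`a'`, `b'` on `T(I)`: for every solution `x` of the source equation the function
`y(s) = X₁(T⁻¹(s))x(T⁻¹(s)) + X₀(T⁻¹(s))` is a solution of the target equation. -/
def FPMapsODE (r : ℕ) (I : Set ℝ) (a : ℕ → ℝ → ℝ) (b : ℝ → ℝ)
    (a' : ℕ → ℝ → ℝ) (b' : ℝ → ℝ) (T X₁ X₀ : ℝ → ℝ) : Prop :=
  ∀ x : ℝ → ℝ, IsSolODE r a b I x →
    ∃ y : ℝ → ℝ, IsSolODE r a' b' (T '' I) y ∧ ∀ t ∈ I, y (T t) = X₁ t * x t + X₀ t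

open Polynomial Real

theorem IsOpen.image_of_deriv_ne_zero {f : ℝ → ℝ} {s : Set ℝ} (hs : IsOpen s)
    (hf : ContDiffOn ℝ 1 f s) (hf' : ∀ x ∈ s, deriv f x ≠ 0) : IsOpen (f '' s) := by
  rw [isOpen_iff_mem_nhds]
  rintro _ ⟨x, hx, rfl⟩
  have hstrict := ((hf x hx).contDiffAt (hs.mem_nhds hx)).hasStrictDerivAt one_ne_zero
  rw [← hstrict.map_nhds_eq (hf' x hx)]
  exact Filter.image_mem_map (hs.mem_nhds hx)

theorem Set.LeftInvOn.deriv_ne_zero {f g : ℝ → ℝ} {s : Set ℝ} {x : ℝ} (h : LeftInvOn g f s)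
    (hs : IsOpen s) (hg : DifferentiableAt ℝ g (f x)) (hf : DifferentiableAt ℝ f x)
    (hx : x ∈ s) : deriv g (f x) ≠ 0 := by
  have hcomp : deriv (g ∘ f) x = 1 := by
    have heq : g ∘ f =ᶠ[nhds x] id := Filter.eventuallyEq_of_mem (hs.mem_nhds hx) h.eqOn
    rw [heq.deriv_eq, deriv_id]
  rw [deriv_comp x hg hf] at hcomp
  exact left_ne_zero_of_mul_eq_one hcomp

theorem odeLHS_eq_sum (r : ℕ) (a : ℕ → ℝ → ℝ) (x : ℝ → ℝ) (t : ℝ) :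
    odeLHS r a x t =
      ∑ i ∈ Finset.range (r + 1), (if i = r then 1 else a i t) * iteratedDeriv i x t := by
  rw [Finset.sum_range_succ, if_pos rfl, one_mul, add_comm, odeLHS]
  congr 1
  exact Finset.sum_congr rfl fun i hi => by rw [if_neg (Finset.mem_range.1 hi).ne]

theorem isSolODE_zero (r : ℕ) (a : ℕ → ℝ → ℝ) (J : Set ℝ) : IsSolODE r a 0 J 0 :=
  ⟨contDiffOn_const, fun t _ => by simp [odeLHS]⟩

theorem IsSolODE.congr {r : ℕ} {a : ℕ → ℝ → ℝ} {b x y : ℝ → ℝ} {J : Set ℝ} (hJ : IsOpen J)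
    (hx : IsSolODE r a b J x) (hxy : EqOn x y J) : IsSolODE r a b J y := by
  refine ⟨hx.1.congr hxy.symm, fun t ht => ?_⟩
  rw [← hx.2 t ht, odeLHS, odeLHS, hxy.symm.iteratedDeriv_of_isOpen hJ r ht]
  exact congrArg _ (Finset.sum_congr rfl fun i _ => by
    rw [hxy.symm.iteratedDeriv_of_isOpen hJ i ht])

theorem IsSolODE.sub {r : ℕ} {a : ℕ → ℝ → ℝ} {b x y : ℝ → ℝ} {J : Set ℝ} (hJ : IsOpen J)
    (hx : IsSolODE r a b J x) (hy : IsSolODE r a b J y) : IsSolODE r a 0 J (x - y) := by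
  refine ⟨hx.1.sub hy.1, fun t ht => ?_⟩
  have hsub : ∀ i : ℕ, iteratedDeriv i (x - y) t = iteratedDeriv i x t - iteratedDeriv i y t :=
    fun i => iteratedDeriv_sub
      ((hx.1.contDiffAt (hJ.mem_nhds ht)).of_le (by exact_mod_cast le_top))
      ((hy.1.contDiffAt (hJ.mem_nhds ht)).of_le (by exact_mod_cast le_top))
  have hdiff : odeLHS r a (x - y) t = odeLHS r a x t - odeLHS r a y t := by
    simp only [odeLHS, hsub, mul_sub, Finset.sum_sub_distrib]
    ring
  rw [hdiff, hx.2 t ht, hy.2 t ht, sub_self, Pi.zero_apply]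

theorem isSolODE_exp_of_isRoot {r : ℕ} {p : ℝ[X]} (hp : p.Monic) (hdeg : p.natDegree = r)
    {μ : ℝ} (hμ : p.IsRoot μ) (J : Set ℝ) :
    IsSolODE r (fun i _ => p.coeff i) 0 J (fun t => exp (μ * t)) := by
  refine ⟨(contDiff_exp.comp (contDiff_const.mul contDiff_id)).contDiffOn, fun t _ => ?_⟩
  have hcoeff : p.coeff r = 1 := hdeg ▸ hp.coeff_natDegree
  have heval := hμ.eq_zero
  rw [eval_eq_sum_range, hdeg, Finset.sum_range_succ, hcoeff] at heval
  simp only [odeLHS, iteratedDeriv_exp_const_mul, Pi.zero_apply, ← mul_assoc, ← Finset.sum_mul]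
  linear_combination exp (μ * t) * heval

theorem FPMapsODE.exists_homogeneous_image {r : ℕ} {I : Set ℝ} {a a' : ℕ → ℝ → ℝ}
    {b' T X₁ X₀ x : ℝ → ℝ} (hFP : FPMapsODE r I a 0 a' b' T X₁ X₀) (hJ : IsOpen (T '' I))
    (hx : IsSolODE r a 0 I x) :
    ∃ z, IsSolODE r a' 0 (T '' I) z ∧ ∀ t ∈ I, z (T t) = X₁ t * x t := by
  obtain ⟨y, hy, hyT⟩ := hFP x hx
  obtain ⟨y₀, hy₀, hy₀T⟩ := hFP 0 (isSolODE_zero r a I)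
  refine ⟨y - y₀, hy.sub hJ hy₀, fun t ht => ?_⟩
  rw [Pi.sub_apply, hyT t ht, hy₀T t ht, Pi.zero_apply]
  ring

noncomputable def omitRootPoly (r k : ℕ) : ℝ[X] :=
  ∏ ν ∈ (Finset.range (r + 1)).erase k, (X - C (ν : ℝ))

theorem omitRootPoly_monic (r k : ℕ) : (omitRootPoly r k).Monic :=
  monic_prod_X_sub_C _ _

theorem natDegree_omitRootPoly {r k : ℕ} (hk : k ≤ r) : (omitRootPoly r k).natDegree = r := by
  rw [omitRootPoly, natDegree_finsetProd_X_sub_C_eq_card,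
    Finset.card_erase_of_mem (Finset.mem_range.2 (Nat.lt_succ_of_le hk)), Finset.card_range]
  omega

theorem isRoot_omitRootPoly {r k ν : ℕ} (hν : ν ≤ r) (hνk : ν ≠ k) :
    (omitRootPoly r k).IsRoot ν := by
  rw [IsRoot, omitRootPoly, eval_prod]
  exact Finset.prod_eq_zero (Finset.mem_erase.2 ⟨hνk, Finset.mem_range.2 (Nat.lt_succ_of_le hν)⟩)
    (by simp)

theorem Submodule.span_finset_le_span_of_linearIndependent {K V ι : Type*} [DivisionRing K]
    [AddCommGroup V] [Module K V] [Fintype ι] {s : Finset V} {v : ι → V}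
    (hv : LinearIndependent K v) (hvs : ∀ i, v i ∈ span K (s : Set V))
    (hcard : s.card ≤ Fintype.card ι) : span K (s : Set V) ≤ span K (range v) :=
  (eq_of_le_of_finrank_le (span_le.2 (range_subset_iff.2 hvs))
    ((finrank_span_finset_le_card s).trans (hcard.trans (finrank_span_eq_card hv).ge))).ge

namespace Polynomial

variable {F : Type*} [Field F]

theorem eval_natCast_ne_zero_of_forall_eval_natCast_eq_zero [CharZero F] {p : F[X]} {n k : ℕ}
    (hp : p ≠ 0) (hdeg : p.natDegree ≤ n)
    (hroots : ∀ ν ≤ n, ν ≠ k → p.eval (ν : F) = 0) : p.eval (k : F) ≠ 0 := by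
  intro hpk
  refine hp (eq_zero_of_natDegree_lt_card_of_eval_eq_zero p
    (Nat.cast_injective.comp Fin.val_injective) (fun ν : Fin (n + 1) => ?_) (by simpa using hdeg))
  by_cases hν : (ν : ℕ) = k
  · simpa [hν] using hpk
  · exact hroots ν (Nat.lt_succ_iff.1 ν.isLt) hν

variable {G : ℕ → F[X]}

theorem natDegree_sum_C_mul_le (hG : ∀ i, (G i).natDegree ≤ i) (c : ℕ → F) (r : ℕ) :
    (∑ i ∈ Finset.range (r + 1), C (c i) * G i).natDegree ≤ r :=
  natDegree_sum_le_of_forall_le _ _ fun i hi =>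
    (natDegree_C_mul_le _ _).trans ((hG i).trans (Nat.le_of_lt_succ (Finset.mem_range.1 hi)))

theorem coeff_sum_C_mul_of_eq_one (hG : ∀ i, (G i).natDegree ≤ i) {c : ℕ → F} {r : ℕ}
    (hc : c r = 1) : (∑ i ∈ Finset.range (r + 1), C (c i) * G i).coeff r = (G r).coeff r := by
  rw [finsetSum_coeff, Finset.sum_range_succ, coeff_C_mul, hc, one_mul, add_eq_right]
  exact Finset.sum_eq_zero fun i hi => by
    rw [coeff_C_mul, coeff_eq_zero_of_natDegree_lt ((hG i).trans_lt (Finset.mem_range.1 hi)),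
      mul_zero]

/-- The combinations provided by `hcomb` are independent (evaluate at `k`), hence span
`span {G₁, …, G_r}`, and they all vanish at `0`. -/
theorem eval_zero_eq_zero_of_forall_exists_sum_C_mul [CharZero F] {r : ℕ}
    (hG : ∀ i, (G i).natDegree ≤ i) (hGr : (G r).coeff r ≠ 0)
    (hcomb : ∀ k ∈ Finset.Icc 1 r, ∃ c : ℕ → F, c 0 = 0 ∧ c r = 1 ∧
      ∀ ν ≤ r, ν ≠ k → (∑ i ∈ Finset.range (r + 1), C (c i) * G i).eval (ν : F) = 0)
    {i : ℕ} (hi : i ∈ Finset.Icc 1 r) : (G i).eval 0 = 0 := by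
  classical
  choose! c hc0 hcr hvan using hcomb
  set g : ℕ → F[X] := fun k => ∑ i ∈ Finset.range (r + 1), C (c k i) * G i
  have hg_ne : ∀ k ∈ Finset.Icc 1 r, (g k).eval (k : F) ≠ 0 := fun k hk =>
    eval_natCast_ne_zero_of_forall_eval_natCast_eq_zero
      (fun h => hGr (by rw [← coeff_sum_C_mul_of_eq_one hG (hcr k hk)]; simp [g, h]))
      (natDegree_sum_C_mul_le hG _ r) (hvan k hk)
  have hg_mem : ∀ k ∈ Finset.Icc 1 r,
      g k ∈ Submodule.span F ((Finset.Icc 1 r).image G : Set F[X]) := by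
    intro k hk
    refine Submodule.sum_mem _ fun i hi => ?_
    rcases Nat.eq_zero_or_pos i with rfl | hi0
    · simp [hc0 k hk]
    · have hiIcc : i ∈ Finset.Icc 1 r :=
        Finset.mem_Icc.2 ⟨hi0, Nat.le_of_lt_succ (Finset.mem_range.1 hi)⟩
      rw [← smul_eq_C_mul]
      exact Submodule.smul_mem _ _
        (Submodule.subset_span (Finset.mem_coe.2 (Finset.mem_image_of_mem G hiIcc)))
  have hli : LinearIndependent F fun k : Finset.Icc 1 r => g k :=
    LinearIndependent.of_pairwise_dual_eq_zero_one _
      (fun k => ((g k).eval (k : F))⁻¹ • leval (k : F))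
      (fun k k' hkk' => by
        simpa using Or.inr (hvan k' k'.2 k (Finset.mem_Icc.1 k.2).2 fun h => hkk' (Subtype.ext h)))
      (fun k => by simp [hg_ne k k.2])
  have hspan := Submodule.span_finset_le_span_of_linearIndependent hli (fun k => hg_mem k k.2)
    (Finset.card_image_le.trans (by simp))
  have hker : Submodule.span F (range fun k : Finset.Icc 1 r => g k) ≤ LinearMap.ker (leval 0) :=
    Submodule.span_le.2 <| range_subset_iff.2 fun k => by
      simpa using hvan k k.2 0 (Nat.zero_le r) fun h => by simpa [← h] using k.2
  simpa using hker (hspan (Submodule.subset_span (Finset.mem_coe.2 (Finset.mem_image_of_mem G hi))))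

end Polynomial

/-- `expCoeff Y τ i j` is the coefficient of `μ ^ j` in `e^{-μτ} (Y e^{μτ})⁽ⁱ⁾`. -/
noncomputable def expCoeff (Y τ : ℝ → ℝ) : ℕ → ℕ → ℝ → ℝ
  | 0, 0 => Y
  | 0, _ + 1 => 0
  | i + 1, 0 => deriv (expCoeff Y τ i 0)
  | i + 1, j + 1 => deriv (expCoeff Y τ i (j + 1)) + deriv τ * expCoeff Y τ i j

noncomputable def expPoly (Y τ : ℝ → ℝ) (i : ℕ) (s : ℝ) : ℝ[X] :=
  ∑ j ∈ Finset.range (i + 1), C (expCoeff Y τ i j s) * X ^ j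

section expCoeff

variable {Y τ : ℝ → ℝ} {J : Set ℝ}

theorem expCoeff_eq_zero_of_lt : ∀ {i j : ℕ}, i < j → expCoeff Y τ i j = 0
  | 0, _ + 1, _ => rfl
  | i + 1, j + 1, h => by
    rw [expCoeff, expCoeff_eq_zero_of_lt (by omega), expCoeff_eq_zero_of_lt (by omega),
      deriv_zero, mul_zero, add_zero]

theorem expCoeff_self : ∀ i : ℕ, expCoeff Y τ i i = Y * deriv τ ^ i
  | 0 => by simp [expCoeff]
  | i + 1 => by
    rw [expCoeff, expCoeff_eq_zero_of_lt (Nat.lt_succ_self i), expCoeff_self i, deriv_zero,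
      zero_add, pow_succ]
    ring

theorem contDiffOn_expCoeff (hJ : IsOpen J) (hY : ContDiffOn ℝ (⊤ : ℕ∞) Y J)
    (hτ : ContDiffOn ℝ (⊤ : ℕ∞) τ J) : ∀ i j, ContDiffOn ℝ (⊤ : ℕ∞) (expCoeff Y τ i j) J
  | 0, 0 => hY
  | 0, _ + 1 => contDiffOn_const
  | i + 1, 0 => (contDiffOn_expCoeff hJ hY hτ i 0).deriv_of_isOpen hJ le_rfl
  | i + 1, j + 1 => ((contDiffOn_expCoeff hJ hY hτ i (j + 1)).deriv_of_isOpen hJ le_rfl).add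
      ((hτ.deriv_of_isOpen hJ le_rfl).mul (contDiffOn_expCoeff hJ hY hτ i j))

theorem eval_expPoly (i : ℕ) (s μ : ℝ) :
    (expPoly Y τ i s).eval μ = ∑ j ∈ Finset.range (i + 1), expCoeff Y τ i j s * μ ^ j := by
  simp [expPoly, eval_finsetSum]

theorem natDegree_expPoly_le (i : ℕ) (s : ℝ) : (expPoly Y τ i s).natDegree ≤ i :=
  natDegree_sum_le_of_forall_le _ _ fun j hj =>
    (natDegree_C_mul_X_pow_le _ j).trans (Nat.le_of_lt_succ (Finset.mem_range.1 hj))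

theorem coeff_expPoly_self (i : ℕ) (s : ℝ) : (expPoly Y τ i s).coeff i = Y s * deriv τ s ^ i := by
  simp [expPoly, coeff_C_mul, coeff_X_pow, expCoeff_self]

theorem eval_zero_expPoly_one (s : ℝ) : (expPoly Y τ 1 s).eval 0 = deriv Y s := by
  simp [eval_expPoly, Finset.sum_range_succ, expCoeff]

theorem iteratedDeriv_mul_exp (hJ : IsOpen J) (hY : ContDiffOn ℝ (⊤ : ℕ∞) Y J)
    (hτ : ContDiffOn ℝ (⊤ : ℕ∞) τ J) (μ : ℝ) (i : ℕ) {s : ℝ} (hs : s ∈ J) :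
    iteratedDeriv i (fun u => Y u * exp (μ * τ u)) s =
      exp (μ * τ s) * (expPoly Y τ i s).eval μ := by
  induction i generalizing s with
  | zero => simp [eval_expPoly, expCoeff, mul_comm]
  | succ i ih =>
    have hdiff : ∀ {f : ℝ → ℝ}, ContDiffOn ℝ (⊤ : ℕ∞) f J → HasDerivAt f (deriv f s) s :=
      fun hf => ((hf s hs).contDiffAt (hJ.mem_nhds hs)).differentiableAt (by simp) |>.hasDerivAt
    have hsum := HasDerivAt.fun_sum (u := Finset.range (i + 1)) fun j _ =>
      (hdiff (contDiffOn_expCoeff hJ hY hτ i j)).mul_const (μ ^ j)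
    have hderiv := (((hdiff hτ).const_mul μ).exp).fun_mul hsum
    simp only [eval_expPoly] at ih ⊢
    rw [iteratedDeriv_succ, Filter.EventuallyEq.deriv_eq
      (Filter.eventuallyEq_of_mem (hJ.mem_nhds hs) fun u hu => ih hu), hderiv.deriv]
    have hlast : deriv (expCoeff Y τ i (i + 1)) s = 0 := by
      rw [expCoeff_eq_zero_of_lt (Nat.lt_succ_self i), deriv_zero, Pi.zero_apply]
    rw [Finset.sum_range_succ' _ (i + 1)]
    simp only [expCoeff, Pi.add_apply, Pi.mul_apply, add_mul, Finset.sum_add_distrib]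
    have hD : ∑ j ∈ Finset.range (i + 1), deriv (expCoeff Y τ i (j + 1)) s * μ ^ (j + 1)
        + deriv (expCoeff Y τ i 0) s * μ ^ 0
        = ∑ j ∈ Finset.range (i + 1), deriv (expCoeff Y τ i j) s * μ ^ j := by
      rw [← Finset.sum_range_succ' (fun j => deriv (expCoeff Y τ i j) s * μ ^ j),
        Finset.sum_range_succ, hlast, zero_mul, add_zero]
    have hτ' : ∑ j ∈ Finset.range (i + 1), deriv τ s * expCoeff Y τ i j s * μ ^ (j + 1)
        = μ * deriv τ s * ∑ j ∈ Finset.range (i + 1), expCoeff Y τ i j s * μ ^ j := by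
      rw [Finset.mul_sum]
      exact Finset.sum_congr rfl fun j _ => by ring
    rw [add_right_comm, hD, hτ']
    ring

theorem eval_sum_expPoly_eq_zero (hJ : IsOpen J) (hY : ContDiffOn ℝ (⊤ : ℕ∞) Y J)
    (hτ : ContDiffOn ℝ (⊤ : ℕ∞) τ J) {r : ℕ} {a : ℕ → ℝ → ℝ} {μ : ℝ}
    (hsol : IsSolODE r a 0 J fun u => Y u * exp (μ * τ u)) {s : ℝ} (hs : s ∈ J) :
    (∑ i ∈ Finset.range (r + 1), C (if i = r then 1 else a i s) * expPoly Y τ i s).eval μ = 0 := by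
  have h := hsol.2 s hs
  simp only [odeLHS_eq_sum, iteratedDeriv_mul_exp hJ hY hτ μ _ hs, Pi.zero_apply] at h
  simp only [eval_finsetSum, eval_mul, eval_C]
  refine (mul_eq_zero.1 ?_).resolve_left (exp_ne_zero (μ * τ s))
  rw [Finset.mul_sum, ← h]
  exact Finset.sum_congr rfl fun i _ => by ring

theorem deriv_eq_zero_of_forall_isSolODE_mul_exp (hJ : IsOpen J)
    (hY : ContDiffOn ℝ (⊤ : ℕ∞) Y J) (hτ : ContDiffOn ℝ (⊤ : ℕ∞) τ J)
    (hY₀ : ∀ s ∈ J, Y s ≠ 0) (hτ' : ∀ s ∈ J, deriv τ s ≠ 0) {r : ℕ} (hr : 1 ≤ r)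
    (hsol : ∀ k ∈ Finset.Icc 1 r, ∃ a : ℕ → ℝ → ℝ, (∀ s ∈ J, a 0 s = 0) ∧
      ∀ ν ≤ r, ν ≠ k → IsSolODE r a 0 J fun u => Y u * exp (ν * τ u))
    {s : ℝ} (hs : s ∈ J) : deriv Y s = 0 := by
  rw [← eval_zero_expPoly_one (τ := τ)]
  refine eval_zero_eq_zero_of_forall_exists_sum_C_mul (G := fun i => expPoly Y τ i s)
    (fun i => natDegree_expPoly_le i s) ?_ (fun k hk => ?_) (Finset.mem_Icc.2 ⟨le_rfl, hr⟩)
  · rw [coeff_expPoly_self]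
    exact mul_ne_zero (hY₀ s hs) (pow_ne_zero r (hτ' s hs))
  · obtain ⟨a, ha₀, ha⟩ := hsol k hk
    refine ⟨fun i => if i = r then 1 else a i s,
      by simp [ha₀ s hs, (Nat.one_le_iff_ne_zero.1 hr).symm], if_pos rfl,
      fun ν hν hνk => eval_sum_expPoly_eq_zero hJ hY hτ (ha ν hν hνk) hs⟩

end expCoeff

theorem exists_deriv_eq_zero_of_forall_exists_isSolODE {r : ℕ} (hr : 2 ≤ r) {I : Set ℝ}
    (hI : IsOpen I) {T X₁ : ℝ → ℝ} (hT : DifferentiableOn ℝ T I) (hJ : IsOpen (T '' I))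
    (hX₁ : ∀ t ∈ I, X₁ t ≠ 0)
    (hsol : ∀ k ∈ Finset.Icc 1 r, ∃ a : ℕ → ℝ → ℝ, (∀ s ∈ T '' I, a 0 s = 0) ∧
      ∀ ν ≤ r, ν ≠ k → ∃ z, IsSolODE r a 0 (T '' I) z ∧ ∀ t ∈ I, z (T t) = X₁ t * exp (ν * t)) :
    ∃ Y : ℝ → ℝ, ContDiffOn ℝ (⊤ : ℕ∞) Y (T '' I) ∧ (∀ t ∈ I, Y (T t) = X₁ t) ∧
      ∀ s ∈ T '' I, deriv Y s = 0 := by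
  obtain ⟨_, -, hz⟩ := hsol r (Finset.mem_Icc.2 ⟨by omega, le_rfl⟩)
  obtain ⟨Y, ⟨hY, -⟩, hYT⟩ := hz 0 (Nat.zero_le r) (by omega)
  obtain ⟨Z, ⟨hZ, -⟩, hZT⟩ := hz 1 (by omega) (by omega)
  simp only [Nat.cast_zero, zero_mul, exp_zero, mul_one, Nat.cast_one, one_mul] at hYT hZT
  have hY₀ : ∀ s ∈ T '' I, Y s ≠ 0 := by
    rintro _ ⟨t, ht, rfl⟩
    exact hYT t ht ▸ hX₁ t ht
  have hZY : ∀ t ∈ I, Z (T t) / Y (T t) = exp t := fun t ht => by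
    rw [hYT t ht, hZT t ht, mul_div_cancel_left₀ _ (hX₁ t ht)]
  set τ : ℝ → ℝ := fun s => log (Z s / Y s)
  have hτT : LeftInvOn τ T I := fun t ht => by simp only [τ, hZY t ht, log_exp]
  have hτ : ContDiffOn ℝ (⊤ : ℕ∞) τ (T '' I) := (hZ.div hY hY₀).log <| by
    rintro _ ⟨t, ht, rfl⟩
    simp [hZY t ht]
  have hτ' : ∀ s ∈ T '' I, deriv τ s ≠ 0 := by
    rintro _ ⟨t, ht, rfl⟩
    exact hτT.deriv_ne_zero hI ((hτ.differentiableOn (by simp)).differentiableAt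
      (hJ.mem_nhds (mem_image_of_mem T ht))) (hT.differentiableAt (hI.mem_nhds ht)) ht
  refine ⟨Y, hY, hYT, fun s hs => deriv_eq_zero_of_forall_isSolODE_mul_exp hJ hY hτ hY₀ hτ'
    (r := r) (by omega) (fun k hk => ?_) hs⟩
  obtain ⟨a, ha₀, ha⟩ := hsol k hk
  refine ⟨a, ha₀, fun ν hν hνk => ?_⟩
  obtain ⟨z, hz, hzT⟩ := ha ν hν hνk
  refine hz.congr hJ ?_
  rintro _ ⟨t, ht, rfl⟩
  rw [hzT t ht, ← hYT t ht]
  exact congrArg (fun x => Y (T t) * exp (ν * x)) (hτT ht).symm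

theorem stmt11_general (r : ℕ) (hr : 2 ≤ r) (I : Set ℝ) (hI : IsOpenInterval I)
    (T X₁ X₀ : ℝ → ℝ)
    (hT : ContDiffOn ℝ (⊤ : ℕ∞) T I)
    (hTX : ∀ t ∈ I, deriv T t * X₁ t ≠ 0)
    (hmaps : ∀ (a : ℕ → ℝ → ℝ) (b : ℝ → ℝ),
      (∀ i, ContDiffOn ℝ (⊤ : ℕ∞) (a i) I) → ContDiffOn ℝ (⊤ : ℕ∞) b I →
      (∀ t ∈ I, a 0 t = 0) →
      ∃ (a' : ℕ → ℝ → ℝ) (b' : ℝ → ℝ),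
        (∀ i, ContDiffOn ℝ (⊤ : ℕ∞) (a' i) (T '' I)) ∧ ContDiffOn ℝ (⊤ : ℕ∞) b' (T '' I) ∧
        (∀ s ∈ T '' I, a' 0 s = 0) ∧
        FPMapsODE r I a b a' b' T X₁ X₀) :
    ∃ C : ℝ, C ≠ 0 ∧ ∀ t ∈ I, X₁ t = C := by
  obtain ⟨hIo, hIc, t₀, ht₀⟩ := hI
  have hX₁ : ∀ t ∈ I, X₁ t ≠ 0 := fun t ht => right_ne_zero_of_mul (hTX t ht)
  have hJ : IsOpen (T '' I) := hIo.image_of_deriv_ne_zero (hT.of_le (by simp))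
    fun t ht => left_ne_zero_of_mul (hTX t ht)
  have hsol : ∀ k ∈ Finset.Icc 1 r, ∃ a' : ℕ → ℝ → ℝ, (∀ s ∈ T '' I, a' 0 s = 0) ∧
      ∀ ν ≤ r, ν ≠ k → ∃ z, IsSolODE r a' 0 (T '' I) z ∧
        ∀ t ∈ I, z (T t) = X₁ t * exp (ν * t) := by
    intro k hk
    obtain ⟨hk₁, hkr⟩ := Finset.mem_Icc.1 hk
    obtain ⟨a', b', -, -, ha'₀, hFP⟩ := hmaps (fun i _ => (omitRootPoly r k).coeff i) 0
      (fun _ => contDiffOn_const) contDiffOn_const fun _ _ => by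
        simpa [coeff_zero_eq_eval_zero] using isRoot_omitRootPoly (Nat.zero_le r) (by omega)
    exact ⟨a', ha'₀, fun ν hν hνk => hFP.exists_homogeneous_image hJ <| isSolODE_exp_of_isRoot
      (omitRootPoly_monic r k) (natDegree_omitRootPoly hkr) (isRoot_omitRootPoly hν hνk) I⟩
  obtain ⟨Y, hY, hYT, hY'⟩ := exists_deriv_eq_zero_of_forall_exists_isSolODE hr hIo
    (hT.differentiableOn (by simp)) hJ hX₁ hsol
  obtain ⟨C, hC⟩ := hJ.exists_is_const_of_deriv_eq_zero (hIc.isPreconnected.image T hT.continuousOn)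
    (hY.differentiableOn (by simp)) hY'
  have hX₁C : ∀ t ∈ I, X₁ t = C := fun t ht => (hYT t ht).symm.trans (hC _ (mem_image_of_mem T ht))
  exact ⟨C, hX₁C t₀ ht₀ ▸ hX₁ t₀ ht₀, hX₁C⟩

/-- if a fiber-preserving transformation `t̃ = T(t)`, `x̃ = X₁(t)x + X₀(t)`
with `T' X₁ ≠ 0` maps every `r`-th order (`r ≥ 2`) linear ODE of first Arnold form
(`a₀ ≡ 0`) on `I` to an equation of first Arnold form on `T(I)`, then `X₁` is a nonzero
constant. -/
theorem stmt11 (r : ℕ) (hr : 2 ≤ r) (I : Set ℝ) (hI : IsOpenInterval I)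
    (T X₁ X₀ : ℝ → ℝ)
    (hT : ContDiffOn ℝ (⊤ : ℕ∞) T I) (hX₁ : ContDiffOn ℝ (⊤ : ℕ∞) X₁ I) (hX₀ : ContDiffOn ℝ (⊤ : ℕ∞) X₀ I)
    (hTX : ∀ t ∈ I, deriv T t * X₁ t ≠ 0)
    (hmaps : ∀ (a : ℕ → ℝ → ℝ) (b : ℝ → ℝ),
      (∀ i, ContDiffOn ℝ (⊤ : ℕ∞) (a i) I) → ContDiffOn ℝ (⊤ : ℕ∞) b I →
      (∀ t ∈ I, a 0 t = 0) →
      ∃ (a' : ℕ → ℝ → ℝ) (b' : ℝ → ℝ),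
        (∀ i, ContDiffOn ℝ (⊤ : ℕ∞) (a' i) (T '' I)) ∧ ContDiffOn ℝ (⊤ : ℕ∞) b' (T '' I) ∧
        (∀ s ∈ T '' I, a' 0 s = 0) ∧
        FPMapsODE r I a b a' b' T X₁ X₀) :
    ∃ C : ℝ, C ≠ 0 ∧ ∀ t ∈ I, X₁ t = C :=
  stmt11_general r hr I hI T X₁ X₀ hT hTX hmaps
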